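/- Let $q = 5$. There exists an integer $r_0 \geq 2$ such that for every integer $r \geq r_0$, every $\mathbb{F}_q$-basis $\{\beta_1, \ldots, \beta_r\}$ of $\mathbb{F}_{q^r}$, and all $c_1, \ldots, c_r \in \mathbb{F}_q$, the set $\mathcal{S}_{\mathcal{C}}^{\ast}$ of nonzero elements $\sum_{i=1}^r a_i\beta_i$ with $a_i \neq c_i$ for all $i$ contains a primitive element of $\mathbb{F}_{q^r}$. -/

import Mathlib

/-!
Fix a character `χ` of `𝔽_{q^r}` of exact order `n = q^r - 1`. Vinogradov's formula
`[ord x = n] = ∑_{d ∣ n} μ(d)/d ∑_{j < d} χ^{j n/d}(x)` counts the primitive elements of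
`S = S_C^*`: the terms `j = 0` give `φ(n)/n · #(S ∖ {0}) ≥ 2^{-ω(n)} ((q-1)^r - 1)`, the others
are sums of nontrivial characters over `S`, with total weight `∑_{d ∣ n} |μ(d)| = 2^{ω(n)}`.
Expanding each indicator `[a_i ≠ c_i]` in the additive characters `a ↦ ψ(t a)` of `𝔽_q` turns a
character sum over `S` into Gauss sums of `𝔽_{q^r}`, each of absolute value at most `q^{r/2}`,
with total weight `(2(q-1)/q)^r`. So `S` contains a primitive element as soon as
`4^{ω(n)} (2(q-1)/q)^r q^{r/2} < (q-1)^r - 1`. For `q = 5` this reads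
`4^{ω(n)} (8/5)^r 5^{r/2} < 4^r - 1`, which holds for large `r` because `ω(n)! ≤ n ≤ 5^r`
forces `ω(n) = o(r)`, while `(8/5) √5 < 4`.
-/

open Finset ArithmeticFunction Filter
open scoped Nat
open scoped ArithmeticFunction.Moebius ArithmeticFunction.zeta

theorem Finset.factorial_card_le_prod (s : Finset ℕ) (hs : ∀ p ∈ s, 0 < p) :
    (#s)! ≤ ∏ p ∈ s, p := by
  induction s using Finset.induction_on_max with
  | empty => simp
  | insert a s ha ih =>
    have ha_notMem : a ∉ s := fun h => lt_irrefl a (ha a h)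
    have hs_sub : s ⊆ Ico 1 a := fun p hp =>
      mem_Ico.mpr ⟨hs p (mem_insert_of_mem hp), ha p hp⟩
    have hcard : #s + 1 ≤ a := by
      have := card_le_card hs_sub
      rw [Nat.card_Ico] at this
      have := hs a (mem_insert_self a s)
      omega
    rw [prod_insert ha_notMem, card_insert_of_notMem ha_notMem, Nat.factorial_succ]
    exact Nat.mul_le_mul hcard (ih fun p hp => hs p (mem_insert_of_mem hp))

theorem Nat.factorial_card_primeFactors_le {n : ℕ} (hn : n ≠ 0) : (#n.primeFactors)! ≤ n :=
  calc (#n.primeFactors)! ≤ ∏ p ∈ n.primeFactors, p :=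
        factorial_card_le_prod _ fun _ => Nat.pos_of_mem_primeFactors
    _ ≤ n := Nat.le_of_dvd (Nat.pos_of_ne_zero hn) (Nat.prod_primeFactors_dvd n)

theorem eventually_mul_card_primeFactors_lt (b k : ℕ) :
    ∀ᶠ r in atTop, ∀ n : ℕ, n ≠ 0 → n ≤ b ^ r → k * #n.primeFactors < r := by
  obtain ⟨M, hM⟩ := eventually_atTop.mp (Nat.eventually_pow_lt_factorial_sub (b ^ k) 0)
  filter_upwards [eventually_ge_atTop (k * M + 1)] with r hr n hn hnb
  by_contra! hle
  have hb : 0 < b := Nat.pos_of_ne_zero fun hb => by simp [hb, show r ≠ 0 by omega] at hnb; omega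
  have hM_le : M ≤ #n.primeFactors := (Nat.lt_of_mul_lt_mul_left (a := k) (by omega)).le
  have hpow := hM _ hM_le
  rw [Nat.sub_zero, ← pow_mul] at hpow
  have hfact := Nat.factorial_card_primeFactors_le hn
  have hmono := Nat.pow_le_pow_right hb hle
  omega

theorem sum_divisors_moebius_div {n : ℕ} (hn : n ≠ 0) :
    ∑ d ∈ n.divisors, (μ d : ℝ) / d = φ n / n := by
  have hinv := (sum_eq_iff_sum_mul_moebius_eq (R := ℝ) (f := fun d => (φ d : ℝ))
    (g := fun n => (n : ℝ))).mp (fun m _ => by exact_mod_cast Nat.sum_totient m) n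
    (Nat.pos_of_ne_zero hn)
  rw [← hinv, Nat.sum_divisorsAntidiagonal (fun x y => (μ x : ℝ) * y), eq_div_iff
    (by exact_mod_cast hn), sum_mul]
  refine sum_congr rfl fun d hd => ?_
  have hd0 : (d : ℝ) ≠ 0 := by exact_mod_cast (Nat.pos_of_mem_divisors hd).ne'
  rw [Nat.cast_div (Nat.dvd_of_mem_divisors hd) hd0]
  field_simp

theorem inv_two_pow_card_primeFactors_le_totient_div {n : ℕ} (hn : n ≠ 0) :
    (2 ^ #n.primeFactors : ℝ)⁻¹ ≤ φ n / n := by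
  have hprod : (φ n : ℝ) / n = ∏ p ∈ n.primeFactors, (1 - (p : ℝ)⁻¹) := by
    have h : (φ n : ℝ) = n * ∏ p ∈ n.primeFactors, (1 - (p : ℝ)⁻¹) := by
      have h := congrArg (Rat.cast : ℚ → ℝ) (Nat.totient_eq_mul_prod_factors n)
      push_cast at h
      exact h
    rw [h, mul_div_cancel_left₀ _ (by exact_mod_cast hn)]
  rw [hprod, ← inv_pow, ← prod_const]
  refine prod_le_prod (fun _ _ => by norm_num) fun p hp => ?_
  have hp : (2 : ℝ) ≤ p := by exact_mod_cast (Nat.prime_of_mem_primeFactors hp).two_le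
  have : (p : ℝ)⁻¹ ≤ 2⁻¹ := inv_anti₀ (by norm_num) hp
  linarith

theorem sum_divisors_abs_moebius {n : ℕ} (hn : n ≠ 0) :
    ∑ d ∈ n.divisors, |(μ d : ℝ)| = 2 ^ #n.primeFactors := by
  have habs : ∀ d, |(μ d : ℝ)| = if Squarefree d then 1 else 0 := fun d => by
    rw [← Int.cast_abs, abs_moebius]
    split_ifs <;> simp
  rw [sum_congr rfl fun d _ => habs d, ← sum_filter, Nat.sum_divisors_filter_squarefree hn,
    sum_const, card_powerset, Nat.factors_eq, List.toFinset_coe, Nat.toFinset_factors,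
    nsmul_eq_mul, mul_one, Nat.cast_pow, Nat.cast_ofNat]

theorem norm_sum_moebius_div_mul_sum_Ico_le {n : ℕ} (hn : n ≠ 0) {G : ℝ} (hG : 0 ≤ G)
    (T : ℕ → ℂ) (hT : ∀ k, 0 < k → k < n → ‖T k‖ ≤ G) :
    ‖∑ d ∈ n.divisors, (μ d / d : ℂ) * ∑ j ∈ Ico 1 d, T (j * (n / d))‖
      ≤ 2 ^ #n.primeFactors * G := by
  rw [← sum_divisors_abs_moebius hn, sum_mul]
  refine norm_sum_le_of_le _ fun d hd => ?_
  obtain ⟨hdn, -⟩ := Nat.mem_divisors.mp hd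
  have hd : 0 < d := Nat.pos_of_mem_divisors hd
  have hquot : 0 < n / d := Nat.div_pos (Nat.le_of_dvd (Nat.pos_of_ne_zero hn) hdn) hd
  have hinner : ‖∑ j ∈ Ico 1 d, T (j * (n / d))‖ ≤ d * G := by
    calc ‖∑ j ∈ Ico 1 d, T (j * (n / d))‖ ≤ ∑ _j ∈ Ico 1 d, G := by
          refine norm_sum_le_of_le _ fun j hj => ?_
          obtain ⟨hj1, hjd⟩ := mem_Ico.mp hj
          refine hT _ (Nat.mul_pos hj1 hquot) ?_
          calc j * (n / d) < d * (n / d) := Nat.mul_lt_mul_of_pos_right hjd hquot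
            _ = n := Nat.mul_div_cancel' hdn
      _ ≤ d * G := by
          rw [sum_const, Nat.card_Ico, nsmul_eq_mul]
          gcongr
          exact_mod_cast Nat.sub_le d 1
  calc ‖(μ d / d : ℂ) * ∑ j ∈ Ico 1 d, T (j * (n / d))‖
      ≤ |(μ d : ℝ)| / d * (d * G) := by
        rw [norm_mul, norm_div, Complex.norm_intCast, Complex.norm_natCast]
        gcongr
    _ = |(μ d : ℝ)| * G := by field_simp

section MulChar

variable {M : Type*} [CommMonoid M]

theorem MulChar.exists_injective_toUnitHom [Finite Mˣ] [IsCyclic Mˣ] :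
    ∃ χ : MulChar M ℂ, Function.Injective χ.toUnitHom := by
  have : NeZero (Nat.card Mˣ) := ⟨Nat.card_pos.ne'⟩
  let e : Mˣ ≃* rootsOfUnity (Nat.card Mˣ) ℂ :=
    mulEquivOfCyclicCardEq (Complex.card_rootsOfUnity _).symm
  obtain ⟨χ, hχ⟩ := MulChar.equivToUnitHom.surjective
    ((rootsOfUnity (Nat.card Mˣ) ℂ).subtype.comp e.toMonoidHom)
  refine ⟨χ, ?_⟩
  rw [MulChar.toUnitHom_eq, hχ]
  exact Subtype.val_injective.comp e.injective

theorem MulChar.pow_ne_one_of_injective_toUnitHom [IsCyclic Mˣ] {R : Type*} [CommRing R]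
    {χ : MulChar M R} (hχ : Function.Injective χ.toUnitHom) {m : ℕ} (hm : 0 < m)
    (hmn : m < Nat.card Mˣ) : χ ^ m ≠ 1 := by
  obtain ⟨g, hg⟩ := IsCyclic.exists_generator (α := Mˣ)
  intro h
  have hgm : g ^ m = 1 := hχ <| Units.ext <| by
    simp [← MulChar.pow_apply_coe, h]
  rw [← orderOf_eq_card_of_forall_mem_zpowers hg] at hmn
  exact pow_ne_one_of_lt_orderOf hm.ne' hmn hgm

theorem MulChar.sum_range_pow_apply_eq_zero {R : Type*} [Field R] {χ : MulChar M R}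
    (hχ : Function.Injective χ.toUnitHom) {w : Mˣ} (hw1 : w ≠ 1) {d : ℕ} (hw : w ^ d = 1) :
    ∑ j ∈ range d, χ w ^ j = 0 := by
  have hχw : χ w ≠ 1 := fun h => hw1 <| hχ <| Units.ext <| by simp [h]
  rw [geom_sum_eq hχw, ← map_pow, ← Units.val_pow_eq_pow_val, hw]
  simp

theorem MulChar.sum_divisors_moebius_div_mul_sum_range_eq_ite [Finite Mˣ] {χ : MulChar M ℂ}
    (hχ : Function.Injective χ.toUnitHom) (x : M) :
    ∑ d ∈ (Nat.card Mˣ).divisors,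
        (μ d / d : ℂ) * ∑ j ∈ range d, (χ ^ (j * (Nat.card Mˣ / d))) x
      = if orderOf x = Nat.card Mˣ then 1 else 0 := by
  set n := Nat.card Mˣ
  have hn : n ≠ 0 := Nat.card_pos.ne'
  by_cases hx : IsUnit x
  swap
  · have : orderOf x ≠ n := fun h => hx (isOfFinOrder_iff_pow_eq_one.mpr
      ⟨n, Nat.pos_of_ne_zero hn, h ▸ pow_orderOf_eq_one x⟩).isUnit
    simp [MulChar.map_nonunit _ hx, this]
  obtain ⟨v, rfl⟩ := hx
  have hvn : orderOf v ∣ n := orderOf_dvd_natCard v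
  have hinner : ∀ d ∈ n.divisors, (μ d / d : ℂ) * ∑ j ∈ range d, (χ ^ (j * (n / d))) v
      = if d ∣ n / orderOf v then (μ d : ℂ) else 0 := fun d hd => by
    obtain ⟨hdn, -⟩ := Nat.mem_divisors.mp hd
    have hpow : ∀ j, (χ ^ (j * (n / d))) v = χ ↑(v ^ (n / d)) ^ j := fun j => by
      rw [MulChar.pow_apply_coe, Units.val_pow_eq_pow_val, map_pow, ← pow_mul, mul_comm]
    have hiff : v ^ (n / d) = 1 ↔ d ∣ n / orderOf v := by
      rw [← orderOf_dvd_iff_pow_eq_one, Nat.dvd_div_iff_mul_dvd hdn, Nat.dvd_div_iff_mul_dvd hvn,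
        mul_comm]
    simp_rw [hpow]
    split_ifs with h
    · have hd0 : (d : ℂ) ≠ 0 := by exact_mod_cast (Nat.pos_of_mem_divisors hd).ne'
      simp [hiff.mpr h, hd0]
    · have hw : (v ^ (n / d)) ^ d = 1 := by
        rw [← pow_mul, Nat.div_mul_cancel hdn, pow_card_eq_one']
      rw [MulChar.sum_range_pow_apply_eq_zero hχ (mt hiff.mp h) hw, mul_zero]
  have hmoebius : ∀ m, ∑ d ∈ m.divisors, (μ d : ℂ) = if m = 1 then 1 else 0 := fun m => by
    have h : ((μ : ArithmeticFunction ℂ) * ζ) m = (1 : ArithmeticFunction ℂ) m := by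
      rw [coe_moebius_mul_coe_zeta]
    rw [coe_mul_zeta_apply, ArithmeticFunction.one_apply] at h
    simpa using h
  rw [sum_congr rfl hinner, ← sum_filter,
    Nat.divisors_filter_dvd_of_dvd hn (Nat.div_dvd_of_dvd hvn), hmoebius, orderOf_units]
  simp only [Nat.div_eq_iff_eq_mul_left (_root_.orderOf_pos v) hvn, one_mul, eq_comm]

theorem MulChar.card_filter_orderOf_eq_eq [Finite Mˣ] {χ : MulChar M ℂ}
    (hχ : Function.Injective χ.toUnitHom) (S : Finset M) :
    (#{x ∈ S | orderOf x = Nat.card Mˣ} : ℂ)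
      = φ (Nat.card Mˣ) / Nat.card Mˣ * ∑ x ∈ S, (1 : MulChar M ℂ) x
        + ∑ d ∈ (Nat.card Mˣ).divisors, (μ d / d : ℂ)
            * ∑ j ∈ Ico 1 d, ∑ x ∈ S, (χ ^ (j * (Nat.card Mˣ / d))) x := by
  set n := Nat.card Mˣ
  set T : ℕ → ℂ := fun k => ∑ x ∈ S, (χ ^ k) x
  calc (#{x ∈ S | orderOf x = n} : ℂ) = ∑ x ∈ S, if orderOf x = n then 1 else 0 := by
        rw [card_filter]
        push_cast
        rfl
    _ = ∑ x ∈ S, ∑ d ∈ n.divisors, (μ d / d : ℂ) * ∑ j ∈ range d, (χ ^ (j * (n / d))) x :=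
        sum_congr rfl fun x _ => (MulChar.sum_divisors_moebius_div_mul_sum_range_eq_ite hχ x).symm
    _ = ∑ d ∈ n.divisors, (μ d / d : ℂ) * ∑ j ∈ range d, T (j * (n / d)) := by
        rw [sum_comm]
        refine sum_congr rfl fun d _ => ?_
        rw [← mul_sum, sum_comm]
    _ = ∑ d ∈ n.divisors, (μ d / d : ℂ) * T 0
          + ∑ d ∈ n.divisors, (μ d / d : ℂ) * ∑ j ∈ Ico 1 d, T (j * (n / d)) := by
        rw [← sum_add_distrib]
        refine sum_congr rfl fun d hd => ?_
        rw [range_eq_Ico, sum_eq_sum_Ico_succ_bot (Nat.pos_of_mem_divisors hd), zero_mul, mul_add]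
    _ = _ := by
        have h := congrArg Complex.ofReal (sum_divisors_moebius_div (n := n) Nat.card_pos.ne')
        push_cast at h
        rw [← sum_mul, h]
        simp only [T, pow_zero]

end MulChar

theorem totient_div_mul_card_sub_one_sub_le_card_filter_orderOf_eq {E : Type*} [Field E]
    [Fintype E] [DecidableEq E] (S : Finset E) {G : ℝ} (hG : 0 ≤ G)
    (hS : ∀ χ : MulChar E ℂ, χ ≠ 1 → ‖∑ x ∈ S, χ x‖ ≤ G) :
    φ (Nat.card Eˣ) / Nat.card Eˣ * (#S - 1) - 2 ^ #(Nat.card Eˣ).primeFactors * G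
      ≤ #{x ∈ S | orderOf x = Nat.card Eˣ} := by
  obtain ⟨χ, hχ⟩ := MulChar.exists_injective_toUnitHom (M := E)
  set n := Nat.card Eˣ
  have hunits : ∑ x ∈ S, (1 : MulChar E ℂ) x = #{x ∈ S | x ≠ 0} := by
    rw [card_filter, Nat.cast_sum]
    refine sum_congr rfl fun x _ => ?_
    split_ifs with hx
    · simp [MulChar.one_apply (isUnit_iff_ne_zero.mpr hx)]
    · simp [not_not.mp hx, MulChar.map_zero]
  have hcount := MulChar.card_filter_orderOf_eq_eq hχ S
  rw [hunits, ← sub_eq_iff_eq_add'] at hcount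
  have herror := norm_sum_moebius_div_mul_sum_Ico_le Nat.card_pos.ne' hG
    (fun k => ∑ x ∈ S, (χ ^ k) x) fun k hk hkn =>
      hS _ (MulChar.pow_ne_one_of_injective_toUnitHom hχ hk hkn)
  rw [← hcount] at herror
  have habs : |(#{x ∈ S | orderOf x = n} : ℝ) - φ n / n * #{x ∈ S | x ≠ 0}|
      ≤ 2 ^ #n.primeFactors * G := by
    convert herror using 1
    rw [← Real.norm_eq_abs, ← Complex.norm_real]
    push_cast
    rfl
  have hnonzero : (#S : ℝ) - 1 ≤ #{x ∈ S | x ≠ 0} := by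
    have h : #S ≤ #{x ∈ S | x ≠ 0} + 1 := by
      rw [filter_ne']
      have := pred_card_le_card_erase (s := S) (a := 0)
      omega
    rw [sub_le_iff_le_add]
    exact_mod_cast h
  have hdensity : 0 ≤ (φ n / n : ℝ) := by positivity
  nlinarith [(abs_le.mp habs).1]

theorem AddChar.map_sum_eq_prod {ι A M : Type*} [AddCommMonoid A] [CommMonoid M]
    (ψ : AddChar A M) (s : Finset ι) (f : ι → A) : ψ (∑ i ∈ s, f i) = ∏ i ∈ s, ψ (f i) := by
  classical
  induction s using Finset.induction_on with
  | empty => simp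
  | insert a s ha ih => rw [sum_insert ha, prod_insert ha, map_add_eq_mul, ih]

theorem norm_gaussSum_eq_sqrt_card {R : Type*} [Field R] [Fintype R] {χ : MulChar R ℂ}
    (hχ : χ ≠ 1) {ψ : AddChar R ℂ} (hψ : ψ.IsPrimitive) :
    ‖gaussSum χ ψ‖ = √(Fintype.card R) := by
  have hconj : gaussSum χ⁻¹ ψ⁻¹ = starRingEnd ℂ (gaussSum χ ψ) := by
    simp only [gaussSum, map_sum, map_mul, AddChar.inv_apply, AddChar.map_neg_eq_conj,
      ← MulChar.star_apply']
    rfl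
  have h := gaussSum_mul_gaussSum_eq_card hχ hψ
  rw [hconj, Complex.mul_conj, Complex.normSq_eq_norm_sq] at h
  rw [← Real.sqrt_sq (norm_nonneg _)]
  congr 1
  exact_mod_cast h

theorem AddChar.compAddMonoidHom_ne_one_of_ne_zero {F V : Type*} [Field F] [AddCommGroup V]
    [Module F V] {ψ : AddChar F ℂ} (hψ : ψ ≠ 1) {f : V →ₗ[F] F} (hf : f ≠ 0) :
    ψ.compAddMonoidHom f.toAddMonoidHom ≠ 1 := by
  obtain ⟨a, ha⟩ := AddChar.ne_one_iff.mp hψ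
  obtain ⟨v, hv⟩ := DFunLike.ne_iff.mp hf
  rw [AddChar.ne_one_iff]
  refine ⟨(a / f v) • v, ?_⟩
  simpa [div_mul_cancel₀ _ hv] using ha

theorem norm_gaussSum_compAddMonoidHom_le {F E : Type*} [Field F] [Field E] [Fintype E]
    [Module F E] {χ : MulChar E ℂ} (hχ : χ ≠ 1) {ψ : AddChar F ℂ}
    (hψ : ψ ≠ 1) (f : E →ₗ[F] F) :
    ‖gaussSum χ (ψ.compAddMonoidHom f.toAddMonoidHom)‖ ≤ √(Fintype.card E) := by
  rcases eq_or_ne f 0 with rfl | hf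
  · have : ψ.compAddMonoidHom (0 : E →ₗ[F] F).toAddMonoidHom = 1 := by ext; simp
    rw [this, gaussSum_one_right hχ, norm_zero]
    positivity
  · exact (norm_gaussSum_eq_sqrt_card hχ (AddChar.IsPrimitive.of_ne_one
      (AddChar.compAddMonoidHom_ne_one_of_ne_zero hψ hf))).le

section Cube

variable {F : Type*} [Field F] [Fintype F] [DecidableEq F]

variable (F) in
noncomputable def nonzeroFourierCoeff (t : F) : ℂ :=
  (if t = 0 then 1 else 0) - (Fintype.card F : ℂ)⁻¹

theorem sum_nonzeroFourierCoeff_mul {ψ : AddChar F ℂ} (hψ : ψ.IsPrimitive) (a : F) :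
    ∑ t, nonzeroFourierCoeff F t * ψ (t * a) = if a = 0 then 0 else 1 := by
  have hq : (Fintype.card F : ℂ) ≠ 0 := by exact_mod_cast Fintype.card_ne_zero
  simp only [nonzeroFourierCoeff, sub_mul, sum_sub_distrib, ite_mul, one_mul, zero_mul,
    sum_ite_eq', mem_univ, if_true, zero_mul, AddChar.map_zero_eq_one, ← mul_sum,
    AddChar.sum_mulShift a hψ]
  split_ifs <;> simp [hq]

theorem sum_norm_nonzeroFourierCoeff :
    ∑ t, ‖nonzeroFourierCoeff F t‖ = 2 * (Fintype.card F - 1) / Fintype.card F := by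
  have hq : (1 : ℝ) ≤ Fintype.card F := by exact_mod_cast Fintype.card_pos
  have hzero : ‖nonzeroFourierCoeff F 0‖ = 1 - (Fintype.card F : ℝ)⁻¹ := by
    have : nonzeroFourierCoeff F 0 = ((1 - (Fintype.card F : ℝ)⁻¹ : ℝ) : ℂ) := by
      simp [nonzeroFourierCoeff]
    rw [this, Complex.norm_real, Real.norm_of_nonneg (sub_nonneg.mpr (inv_le_one_of_one_le₀ hq))]
  have hne : ∀ t ∈ univ.erase (0 : F), ‖nonzeroFourierCoeff F t‖ = (Fintype.card F : ℝ)⁻¹ :=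
    fun t ht => by simp [nonzeroFourierCoeff, ne_of_mem_erase ht]
  rw [← add_sum_erase _ _ (mem_univ 0), hzero, sum_congr rfl hne, sum_const, card_erase_of_mem
    (mem_univ 0), card_univ, nsmul_eq_mul, Nat.cast_sub Fintype.card_pos]
  field_simp
  ring

variable {E : Type*} [Field E] [Fintype E] [Module F E]
  {ι : Type*} [Fintype ι] [DecidableEq ι]

theorem sum_filter_repr_ne_mulChar_eq {ψ : AddChar F ℂ} (hψ : ψ.IsPrimitive) (χ : MulChar E ℂ)
    (B : Module.Basis ι F E) (c : ι → F) :
    ∑ x with ∀ i, B.repr x i ≠ c i, χ x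
      = ∑ t : ι → F, (∏ i, nonzeroFourierCoeff F (t i)) * ψ (-∑ i, t i * c i)
          * gaussSum χ (ψ.compAddMonoidHom (∑ i, t i • B.coord i).toAddMonoidHom) := by
  have hindicator : ∀ x : E, (if ∀ i, B.repr x i ≠ c i then 1 else 0 : ℂ)
      = ∑ t : ι → F, (∏ i, nonzeroFourierCoeff F (t i)) * ψ (-∑ i, t i * c i)
          * ψ (∑ i, t i * B.repr x i) := fun x =>
    calc (if ∀ i, B.repr x i ≠ c i then 1 else 0 : ℂ)
        = ∏ i, if B.repr x i - c i = 0 then 0 else 1 := by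
          simp_rw [sub_eq_zero, ← ite_not (p := B.repr _ _ = c _), Fintype.prod_boole]
      _ = ∏ i, ∑ s, nonzeroFourierCoeff F s * ψ (s * (B.repr x i - c i)) := by
          simp_rw [sum_nonzeroFourierCoeff_mul hψ]
      _ = ∑ t : ι → F, ∏ i, nonzeroFourierCoeff F (t i) * ψ (t i * (B.repr x i - c i)) :=
          Fintype.prod_sum _
      _ = _ := by
          refine sum_congr rfl fun t _ => ?_
          rw [prod_mul_distrib, ← AddChar.map_sum_eq_prod, mul_assoc, ← AddChar.map_add_eq_mul]
          congr 3
          simp only [mul_sub, sum_sub_distrib]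
          ring
  calc ∑ x with ∀ i, B.repr x i ≠ c i, χ x
      = ∑ x, χ x * (if ∀ i, B.repr x i ≠ c i then 1 else 0 : ℂ) := by
        rw [sum_filter]
        exact sum_congr rfl fun x _ => (mul_boole _ _).symm
    _ = _ := by
        simp_rw [hindicator, mul_sum, gaussSum]
        rw [sum_comm]
        refine sum_congr rfl fun t _ => ?_
        rw [mul_sum]
        refine sum_congr rfl fun x _ => ?_
        simp [Module.Basis.coord_apply]
        ring

theorem norm_sum_filter_repr_ne_mulChar_le {χ : MulChar E ℂ} (hχ : χ ≠ 1)
    (B : Module.Basis ι F E) (c : ι → F) :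
    ‖∑ x with ∀ i, B.repr x i ≠ c i, χ x‖
      ≤ (2 * (Fintype.card F - 1) / Fintype.card F) ^ Fintype.card ι * √(Fintype.card E) := by
  obtain ⟨ψ, hψ⟩ := AddChar.exists_apply_ne_zero.mpr (one_ne_zero' F)
  have hψ1 : ψ ≠ 1 := fun h => hψ (by simp [h])
  rw [sum_filter_repr_ne_mulChar_eq (AddChar.IsPrimitive.of_ne_one hψ1),
    ← sum_norm_nonzeroFourierCoeff, ← card_univ (α := ι), ← prod_const, Fintype.prod_sum, sum_mul]
  refine norm_sum_le_of_le _ fun t _ => ?_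
  rw [norm_mul, norm_mul, norm_prod, AddChar.norm_apply, mul_one]
  gcongr
  exact norm_gaussSum_compAddMonoidHom_le hχ hψ1 _

theorem card_filter_repr_ne (B : Module.Basis ι F E) (c : ι → F) :
    #{x | ∀ i, B.repr x i ≠ c i} = (Fintype.card F - 1) ^ Fintype.card ι := by
  have hmap : ({x | ∀ i, B.repr x i ≠ c i} : Finset E).map B.equivFun.toEquiv.toEmbedding
      = Fintype.piFinset fun i => univ.erase (c i) := by
    ext a
    have hrepr : ∀ i, B.repr (B.equivFun.toEquiv.symm a) i = a i := fun i =>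
      congrFun (B.equivFun.apply_symm_apply a) i
    simp only [mem_map_equiv, mem_filter, mem_univ, true_and, hrepr, Fintype.mem_piFinset,
      mem_erase, and_true]
  rw [← card_map, hmap, Fintype.card_piFinset]
  simp [card_erase_of_mem]

end Cube

theorem exists_orderOf_eq_card_units_repr_ne_of_lt {F E : Type*} [Field F] [Fintype F]
    [Field E] [Fintype E] [Module F E] {ι : Type*} [Fintype ι] (B : Module.Basis ι F E)
    (c : ι → F)
    (h : 4 ^ #(Nat.card Eˣ).primeFactors
        * ((2 * (Fintype.card F - 1) / Fintype.card F) ^ Fintype.card ι * √(Fintype.card E))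
      < ((Fintype.card F : ℝ) - 1) ^ Fintype.card ι - 1) :
    ∃ x : E, (x ≠ 0 ∧ ∀ i, B.repr x i ≠ c i) ∧ orderOf x = Nat.card Eˣ := by
  classical
  set S : Finset E := {x | ∀ i, B.repr x i ≠ c i}
  set n := Nat.card Eˣ
  set G : ℝ := (2 * (Fintype.card F - 1) / Fintype.card F) ^ Fintype.card ι * √(Fintype.card E)
  have hq : (1 : ℝ) ≤ Fintype.card F := by exact_mod_cast Fintype.card_pos
  have hG : 0 ≤ G := by
    have : (0 : ℝ) ≤ Fintype.card F - 1 := by linarith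
    positivity
  have hcount := totient_div_mul_card_sub_one_sub_le_card_filter_orderOf_eq S hG
    fun χ hχ => norm_sum_filter_repr_ne_mulChar_le hχ B c
  rw [card_filter_repr_ne, Nat.cast_pow, Nat.cast_sub Fintype.card_pos, Nat.cast_one] at hcount
  have hdensity := inv_two_pow_card_primeFactors_le_totient_div (n := n) Nat.card_pos.ne'
  have hpos : (0 : ℝ) < #{x ∈ S | orderOf x = n} := by
    have h4 : (4 : ℝ) ^ #n.primeFactors = 2 ^ #n.primeFactors * 2 ^ #n.primeFactors := by
      rw [← mul_pow]; norm_num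
    calc (0 : ℝ) < (2 ^ #n.primeFactors : ℝ)⁻¹ * ((Fintype.card F - 1) ^ Fintype.card ι - 1
            - 4 ^ #n.primeFactors * G) := by
          have := sub_pos.mpr h
          positivity
      _ = (2 ^ #n.primeFactors : ℝ)⁻¹ * ((Fintype.card F - 1) ^ Fintype.card ι - 1)
            - 2 ^ #n.primeFactors * G := by
          rw [h4]; field_simp
      _ ≤ φ n / n * ((Fintype.card F - 1) ^ Fintype.card ι - 1) - 2 ^ #n.primeFactors * G := by
          gcongr
          exact (mul_nonneg (by positivity) hG).trans h.le
      _ ≤ _ := hcount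
  obtain ⟨x, hx⟩ := card_pos.mp (by exact_mod_cast hpos)
  obtain ⟨hxS, hxn⟩ := mem_filter.mp hx
  refine ⟨x, ⟨fun h0 => ?_, (mem_filter.mp hxS).2⟩, hxn⟩
  rw [h0, orderOf_zero] at hxn
  exact Nat.card_pos.ne' hxn.symm

theorem four_pow_mul_lt_four_pow_sub_one {k r : ℕ} (hk : 100 * k ≤ r) (hr : 9 ≤ r) :
    (4 : ℝ) ^ k * ((8 / 5) ^ r * √(5 ^ r)) < 4 ^ r - 1 := by
  have hsqrt : √((5 : ℝ) ^ r) ≤ (9 / 4) ^ r := by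
    rw [Real.sqrt_le_iff, ← pow_mul, mul_comm, pow_mul]
    exact ⟨by positivity, pow_le_pow_left₀ (by norm_num) (by norm_num) r⟩
  have hfour : (4 : ℝ) ^ k ≤ (51 / 50) ^ r :=
    calc (4 : ℝ) ^ k ≤ ((51 / 50) ^ 100) ^ k := pow_le_pow_left₀ (by norm_num) (by norm_num) k
      _ = (51 / 50) ^ (100 * k) := by rw [← pow_mul]
      _ ≤ (51 / 50) ^ r := pow_le_pow_right₀ (by norm_num) hk
  have hgap : 2 < ((500 : ℝ) / 459) ^ r :=
    calc (2 : ℝ) < (500 / 459) ^ 9 := by norm_num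
      _ ≤ (500 / 459) ^ r := pow_le_pow_right₀ (by norm_num) hr
  have hbase : (1 : ℝ) ≤ (459 / 125) ^ r := one_le_pow₀ (by norm_num)
  calc (4 : ℝ) ^ k * ((8 / 5) ^ r * √(5 ^ r)) ≤ (51 / 50) ^ r * ((8 / 5) ^ r * (9 / 4) ^ r) := by
        gcongr
    _ = (459 / 125) ^ r := by rw [← mul_pow, ← mul_pow]; norm_num
    _ < 4 ^ r - 1 := by
        have : (4 : ℝ) ^ r = (500 / 459) ^ r * (459 / 125) ^ r := by rw [← mul_pow]; norm_num
        nlinarith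

/-- Theorem 3.3 for `q = 5`: for all sufficiently large `r`, any set `S_C∗` obtained by
removing `r` affine hyperplanes in general position (given by a basis and prescribed
coordinates) from `𝔽_{q^r}` contains a primitive element. -/
theorem primitive_element_exists_q5 (F : Type) [Field F] [Fintype F]
    (hF : Fintype.card F = 5) :
    ∃ r0 : ℕ, 2 ≤ r0 ∧ ∀ r : ℕ, r0 ≤ r →
      ∀ (E : Type) [Field E] [Fintype E] [Algebra F E],
        ∀ (B : Module.Basis (Fin r) F E) (c : Fin r → F),
          ∃ x : E, (x ≠ 0 ∧ ∀ i, B.repr x i ≠ c i) ∧ orderOf x = 5 ^ r - 1 := by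
  obtain ⟨R, hR⟩ := eventually_atTop.mp
    ((eventually_mul_card_primeFactors_lt 5 100).and (eventually_ge_atTop 9))
  refine ⟨max R 2, le_max_right R 2, fun r hr E _ _ _ B c => ?_⟩
  obtain ⟨hω, hr9⟩ := hR r (le_of_max_le_left hr)
  have hcardE : Fintype.card E = 5 ^ r := by rw [Module.card_fintype B, hF, Fintype.card_fin]
  have hunits : Nat.card Eˣ = 5 ^ r - 1 := by
    classical
    rw [Nat.card_eq_fintype_card, Fintype.card_units, hcardE]
  rw [← hunits]
  refine exists_orderOf_eq_card_units_repr_ne_of_lt B c ?_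
  have hbound := four_pow_mul_lt_four_pow_sub_one
    (hω (5 ^ r - 1) (Nat.sub_pos_of_lt (Nat.one_lt_pow (by omega) (by norm_num))).ne'
      (Nat.sub_le _ _)).le hr9
  rw [hF, hcardE, hunits, Fintype.card_fin]
  convert hbound using 3 <;> norm_num
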